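/- Let Γ = ⟨c, a_1, a_2, ..., a_{2m} | c² [a_1,a_2]···[a_{2m−1},a_{2m}] = 1⟩ and let G = B_4 be the Artin braid group on 4 strands with Ω = σ2 σ3 σ1^{−1} σ2^{−1}. Then the assignment c ↦ Ω, a_1 ↦ σ2 Ω^{−1} σ2^{−1}, a_2 ↦ σ2 σ3² σ2^{−1}, a_k ↦ Ω^{i(a_k)} for k ≥ 3 (i(a_k) ∈ {0,1}) extends to a group homomorphism Γ → B_4. -/

import Mathlib

open scoped commutatorElement

/-- Defining relations of the Artin braid group with `m` generators
(braid group on `m+1` strands): the braid and the commuting relations. -/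
def braidRels (m : ℕ) : Set (FreeGroup (Fin m)) :=
  { r | (∃ i j : Fin m, (i : ℕ) + 1 = (j : ℕ) ∧
          r = FreeGroup.of i * FreeGroup.of j * FreeGroup.of i *
              (FreeGroup.of j)⁻¹ * (FreeGroup.of i)⁻¹ * (FreeGroup.of j)⁻¹) ∨
        (∃ i j : Fin m, (i : ℕ) + 2 ≤ (j : ℕ) ∧
          r = FreeGroup.of i * FreeGroup.of j * (FreeGroup.of i)⁻¹ * (FreeGroup.of j)⁻¹) }

/-- The Artin braid group with `m` generators σ₁,…,σ_m (on `m+1` strands). -/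
abbrev Braid (m : ℕ) : Type := PresentedGroup (braidRels m)

/-- The generator σ_{i+1} (0-based index `i`). -/
def sigmaB {m : ℕ} (i : Fin m) : Braid m := PresentedGroup.of i

/-- The generator with 0-based natural-number index (junk value `1` out of range). -/
def sigma' {m : ℕ} (k : ℕ) : Braid m := if h : k < m then sigmaB ⟨k, h⟩ else 1

/-- The Garside half-twist Δ = (σ₁⋯σ_m)(σ₁⋯σ_{m-1})⋯(σ₁σ₂)(σ₁). -/
def garside (m : ℕ) : Braid m :=
  (((List.range m).reverse).map
    (fun n => ((List.range (n + 1)).map (fun t => (sigma' t : Braid m))).prod)).prod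

/-- The pure braid generator A_{i,j} = σ_{j-1}⋯σ_{i+1} σ_i² σ_{i+1}⁻¹⋯σ_{j-1}⁻¹
(1-based strand indices `i < j`). -/
def Abr {m : ℕ} (i j : ℕ) : Braid m :=
  (((List.range' i (j - 1 - i)).reverse.map (fun t => (sigma' t : Braid m))).prod) *
    ((sigma' (i - 1) : Braid m)) ^ 2 *
    (((List.range' i (j - 1 - i)).reverse.map (fun t => (sigma' t : Braid m))).prod)⁻¹

/-- The braid Ω = σ₂σ₃σ₁⁻¹σ₂⁻¹ in B₄. -/
def OmegaB : Braid 3 := sigma' 1 * sigma' 2 * (sigma' 0)⁻¹ * (sigma' 1)⁻¹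

/-- Relator of the non-orientable surface of genus 2m+2:
u v u v⁻¹ [a₁,a₂]⋯[a_{2m−1},a_{2m}], with u = inl 0, v = inl 1 and
a_{2k+1} = inr (k,0), a_{2k+2} = inr (k,1). -/
def relII (m : ℕ) : FreeGroup (Fin 2 ⊕ Fin m × Fin 2) :=
  FreeGroup.of (Sum.inl 0) * FreeGroup.of (Sum.inl 1) * FreeGroup.of (Sum.inl 0) *
    (FreeGroup.of (Sum.inl 1))⁻¹ *
    ((List.finRange m).map
      (fun k => ⁅FreeGroup.of ((Sum.inr (k, (0 : Fin 2)) : Fin 2 ⊕ Fin m × Fin 2)),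
        FreeGroup.of ((Sum.inr (k, (1 : Fin 2)) : Fin 2 ⊕ Fin m × Fin 2))⁆)).prod

/-- Fundamental group of the non-orientable surface of genus 2m+2. -/
abbrev SurfII (m : ℕ) : Type := PresentedGroup {relII m}

/-- Relator of the non-orientable surface of genus 2m+1:
c² [a₁,a₂]⋯[a_{2m−1},a_{2m}], with c = inl 0 and a_{2k+1} = inr (k,0), a_{2k+2} = inr (k,1). -/
def relIII (m : ℕ) : FreeGroup (Fin 1 ⊕ Fin m × Fin 2) :=
  FreeGroup.of (Sum.inl 0) * FreeGroup.of (Sum.inl 0) *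
    ((List.finRange m).map
      (fun k => ⁅FreeGroup.of ((Sum.inr (k, (0 : Fin 2)) : Fin 1 ⊕ Fin m × Fin 2)),
        FreeGroup.of ((Sum.inr (k, (1 : Fin 2)) : Fin 1 ⊕ Fin m × Fin 2))⁆)).prod

/-- Fundamental group of the non-orientable surface of genus 2m+1. -/
abbrev SurfIII (m : ℕ) : Type := PresentedGroup {relIII m}

/-- Relator of the orientable surface of genus m: [a₁,a₂]⋯[a_{2m−1},a_{2m}]. -/
def relI (m : ℕ) : FreeGroup (Fin m × Fin 2) :=
  ((List.finRange m).map
    (fun k => ⁅FreeGroup.of ((k, (0 : Fin 2))), FreeGroup.of ((k, (1 : Fin 2)))⁆)).prod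

/-- Fundamental group of the orientable surface of genus m. -/
abbrev SurfI (m : ℕ) : Type := PresentedGroup {relI m}

/-! Writing a, b, c for σ₁, σ₂, σ₃, the braid relations give the conjugation rules
b⁻¹cb = cbc⁻¹ and aba⁻¹ = b⁻¹ab, from which Ω⁻¹cΩ = a. Hence the commutator of the images of
a₁ and a₂ is b[Ω⁻¹, c²]b⁻¹ = b a²c⁻² b⁻¹, while Ω² = b(ca⁻¹)²b⁻¹ = b c²a⁻² b⁻¹ because a and c
commute, so the relator maps to 1. The remaining generators are powers of Ω, so their
commutators vanish. -/

section BraidRelations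

variable {G : Type*} [Group G] {a b c : G}

theorem mul_mul_inv_eq_of_braid (h : a * b * a = b * a * b) : a * b * a⁻¹ = b⁻¹ * a * b :=
  calc a * b * a⁻¹ = b⁻¹ * (b * a * b) * a⁻¹ := by group
    _ = b⁻¹ * a * b := by rw [← h]; group

theorem inv_mul_mul_eq_of_braid (h : a * b * a = b * a * b) : a⁻¹ * b * a = b * a * b⁻¹ :=
  calc a⁻¹ * b * a = a⁻¹ * (b * a * b) * b⁻¹ := by group
    _ = b * a * b⁻¹ := by rw [← h]; group

theorem inv_mul_mul_eq_of_braid_of_braid (hab : a * b * a = b * a * b)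
    (hbc : b * c * b = c * b * c) :
    (b * c * a⁻¹ * b⁻¹)⁻¹ * c * (b * c * a⁻¹ * b⁻¹) = a :=
  calc (b * c * a⁻¹ * b⁻¹)⁻¹ * c * (b * c * a⁻¹ * b⁻¹)
      = b * a * c⁻¹ * (b⁻¹ * c * b) * c * a⁻¹ * b⁻¹ := by group
    _ = b * (a * b * a⁻¹) * b⁻¹ := by rw [inv_mul_mul_eq_of_braid hbc]; group
    _ = a := by rw [mul_mul_inv_eq_of_braid hab]; group

theorem sq_mul_commutatorElement_conj_eq_one {Ω : G} (hΩ : Ω = b * c * a⁻¹ * b⁻¹)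
    (hab : a * b * a = b * a * b) (hbc : b * c * b = c * b * c) (hac : Commute a c) :
    Ω ^ 2 * ⁅b * Ω⁻¹ * b⁻¹, b * c ^ 2 * b⁻¹⁆ = 1 := by
  have hconj : Ω⁻¹ * c * Ω = a := hΩ ▸ inv_mul_mul_eq_of_braid_of_braid hab hbc
  calc Ω ^ 2 * ⁅b * Ω⁻¹ * b⁻¹, b * c ^ 2 * b⁻¹⁆
      = Ω * Ω * b * ((Ω⁻¹ * c * Ω) * (Ω⁻¹ * c * Ω)) * c⁻¹ * c⁻¹ * b⁻¹ := by
        rw [commutatorElement_def, pow_two, pow_two]; group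
    _ = b * c * (a⁻¹ * c * a) * c⁻¹ * c⁻¹ * b⁻¹ := by rw [hconj, hΩ]; group
    _ = 1 := by rw [hac.inv_mul_cancel]; group

end BraidRelations

section Braid

variable {m : ℕ}

theorem sigmaB_braid {i j : Fin m} (h : (i : ℕ) + 1 = j) :
    sigmaB i * sigmaB j * sigmaB i = sigmaB j * sigmaB i * sigmaB j :=
  PresentedGroup.mk_eq_mk_of_mul_inv_mem (Or.inl ⟨i, j, h, by group⟩)

theorem sigmaB_commute {i j : Fin m} (h : (i : ℕ) + 2 ≤ j) : Commute (sigmaB i) (sigmaB j) :=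
  PresentedGroup.mk_eq_mk_of_mul_inv_mem (Or.inr ⟨i, j, h, by group⟩)

theorem sigma'_eq_sigmaB {k : ℕ} (h : k < m) : (sigma' k : Braid m) = sigmaB ⟨k, h⟩ := dif_pos h

theorem sigma'_braid {k : ℕ} (h : k + 1 < m) :
    (sigma' k : Braid m) * sigma' (k + 1) * sigma' k =
      sigma' (k + 1) * sigma' k * sigma' (k + 1) := by
  rw [sigma'_eq_sigmaB (by omega), sigma'_eq_sigmaB h]
  exact sigmaB_braid rfl

theorem sigma'_commute {k l : ℕ} (hkl : k + 2 ≤ l) (hl : l < m) :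
    Commute (sigma' k : Braid m) (sigma' l) := by
  rw [sigma'_eq_sigmaB (by omega), sigma'_eq_sigmaB hl]
  exact sigmaB_commute hkl

end Braid

theorem omegaB_sq_mul_commutatorElement_eq_one :
    OmegaB ^ 2 * ⁅sigma' 1 * OmegaB⁻¹ * (sigma' 1)⁻¹,
      sigma' 1 * (sigma' 2 : Braid 3) ^ 2 * (sigma' 1)⁻¹⁆ = 1 :=
  sq_mul_commutatorElement_conj_eq_one rfl (sigma'_braid (k := 0) (by norm_num))
    (sigma'_braid (k := 1) (by norm_num)) (sigma'_commute le_rfl (by norm_num))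

section SurfIII

variable {G : Type*} [Group G] {m : ℕ}

theorem lift_relIII (f : Fin 1 ⊕ Fin m × Fin 2 → G) :
    FreeGroup.lift f (relIII m) =
      f (.inl 0) ^ 2 *
        ((List.finRange m).map fun k => ⁅f (.inr (k, 0)), f (.inr (k, 1))⁆).prod := by
  simp [relIII, map_list_prod, map_commutatorElement, pow_two, Function.comp_def]

theorem exists_surfIII_hom (hm : 0 < m) (c x y : G) (t : Fin m × Fin 2 → G)
    (hrel : c ^ 2 * ⁅x, y⁆ = 1) (ht : ∀ k : Fin m, 1 ≤ (k : ℕ) → Commute (t (k, 0)) (t (k, 1))) :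
    ∃ φ : SurfIII m →* G,
      φ (PresentedGroup.of (Sum.inl 0)) = c ∧
      φ (PresentedGroup.of (Sum.inr ((⟨0, hm⟩ : Fin m), 0))) = x ∧
      φ (PresentedGroup.of (Sum.inr ((⟨0, hm⟩ : Fin m), 1))) = y ∧
      ∀ (k : Fin m), 1 ≤ (k : ℕ) → ∀ j : Fin 2,
        φ (PresentedGroup.of (Sum.inr (k, j))) = t (k, j) := by
  let f : Fin 1 ⊕ Fin m × Fin 2 → G
    | .inl _ => c
    | .inr (k, j) => if (k : ℕ) = 0 then ![x, y] j else t (k, j)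
  have hf : ∀ k : Fin m, 1 ≤ (k : ℕ) → ∀ j, f (.inr (k, j)) = t (k, j) := fun k hk j =>
    if_neg (by omega)
  have hrelf : ∀ r ∈ ({relIII m} : Set _), FreeGroup.lift f r = 1 := by
    rintro r rfl
    obtain ⟨n, rfl⟩ := Nat.exists_eq_add_one_of_ne_zero hm.ne'
    have htail : ∀ k : Fin n, ⁅f (.inr (k.succ, 0)), f (.inr (k.succ, 1))⁆ = 1 := fun k => by
      rw [hf _ k.succ_pos _, hf _ k.succ_pos _, commutatorElement_eq_one_iff_commute]
      exact ht _ k.succ_pos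
    rw [lift_relIII, List.finRange_succ, List.map_cons, List.prod_cons, List.map_map,
      List.prod_eq_one (by simp [htail]), mul_one]
    exact hrel
  refine ⟨PresentedGroup.toGroup hrelf, ?_, ?_, ?_, fun k hk j => ?_⟩ <;>
    simp only [PresentedGroup.toGroup.of]
  exacts [rfl, rfl, rfl, hf k hk j]

end SurfIII

theorem stmt19_general (m : ℕ) (hm : 0 < m) (ia : Fin m × Fin 2 → ℕ) :
    ∃ φ : SurfIII m →* Braid 3,
      φ (PresentedGroup.of (Sum.inl 0)) = OmegaB ∧
      φ (PresentedGroup.of (Sum.inr ((⟨0, hm⟩ : Fin m), 0))) =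
        sigma' 1 * OmegaB⁻¹ * (sigma' 1)⁻¹ ∧
      φ (PresentedGroup.of (Sum.inr ((⟨0, hm⟩ : Fin m), 1))) =
        sigma' 1 * (sigma' 2 : Braid 3) ^ 2 * (sigma' 1)⁻¹ ∧
      ∀ (k : Fin m), 1 ≤ (k : ℕ) → ∀ j : Fin 2,
        φ (PresentedGroup.of (Sum.inr (k, j))) = OmegaB ^ (ia (k, j)) :=
  exists_surfIII_hom hm _ _ _ (fun k => OmegaB ^ ia k) omegaB_sq_mul_commutatorElement_eq_one
    fun _ _ => Commute.pow_pow_self _ _ _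

/-- The assignment c ↦ Ω, a₁ ↦ σ₂ Ω⁻¹ σ₂⁻¹, a₂ ↦ σ₂ σ₃² σ₂⁻¹, a_k ↦ Ω^{i(a_k)} (k ≥ 3)
extends to a homomorphism from the fundamental group of the non-orientable surface of
genus 2m+1 to the braid group B₄, where Ω = σ₂σ₃σ₁⁻¹σ₂⁻¹. -/
theorem stmt19 (m : ℕ) (hm : 0 < m) (ia : Fin m × Fin 2 → ℕ) (hia : ∀ x, ia x ≤ 1) :
    ∃ φ : SurfIII m →* Braid 3,
      φ (PresentedGroup.of (Sum.inl 0)) = OmegaB ∧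
      φ (PresentedGroup.of (Sum.inr ((⟨0, hm⟩ : Fin m), 0))) =
        sigma' 1 * OmegaB⁻¹ * (sigma' 1)⁻¹ ∧
      φ (PresentedGroup.of (Sum.inr ((⟨0, hm⟩ : Fin m), 1))) =
        sigma' 1 * (sigma' 2 : Braid 3) ^ 2 * (sigma' 1)⁻¹ ∧
      ∀ (k : Fin m), 1 ≤ (k : ℕ) → ∀ j : Fin 2,
        φ (PresentedGroup.of (Sum.inr (k, j))) = OmegaB ^ (ia (k, j)) :=
  stmt19_general m hm ia
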